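/- arXiv:1805.00381 — 3 statements merged into one kernel-verified Lean document; each statement's English description precedes it below -/
import Mathlib

section
/- (Cai) The set of formulas provably n-provable in T for some n, namely C^∞_T(T) := ⋃_n {φ : T ⊢ [n]_T φ}, is deductively equivalent to T + RFN(T), where RFN(T) is axiomatized by {⟨n⟩_T ⊤ : n ∈ ℕ}. -/
/-- An abstract propositional language with implication and falsum. -/
structure Lang (F : Type) where
  imp : F → F → F
  bot : F

namespace Lang
variable {F : Type} (L : Lang F)
def neg (φ : F) : F := L.imp φ L.bot
def top : F := L.neg L.bot
def conj (φ ψ : F) : F := L.neg (L.imp φ (L.neg ψ))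
def iff (φ ψ : F) : F := L.conj (L.imp φ ψ) (L.imp ψ φ)
end Lang

/-- Classical propositional derivability from a set of axioms `Γ`
(a Hilbert system with modus ponens). -/
inductive Deriv {F : Type} (L : Lang F) (Γ : Set F) : F → Prop
  | hyp {φ} : φ ∈ Γ → Deriv L Γ φ
  | ax1 (φ ψ) : Deriv L Γ (L.imp φ (L.imp ψ φ))
  | ax2 (φ ψ χ) : Deriv L Γ (L.imp (L.imp φ (L.imp ψ χ)) (L.imp (L.imp φ ψ) (L.imp φ χ)))
  | ax3 (φ ψ) : Deriv L Γ (L.imp (L.imp (L.neg φ) (L.neg ψ)) (L.imp ψ φ))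
  | mp {φ ψ} : Deriv L Γ (L.imp φ ψ) → Deriv L Γ φ → Deriv L Γ ψ

/-- The local reflection schema for a provability predicate `Bx`. -/
def RfnSet {F : Type} (L : Lang F) (Bx : F → F) : Set F := {χ | ∃ ψ, χ = L.imp (Bx ψ) ψ}

section Aux
variable {F : Type} {L : Lang F} {Γ Δ : Set F}

theorem Deriv.weaken (h : Γ ⊆ Δ) : ∀ {φ}, Deriv L Γ φ → Deriv L Δ φ := by
  intro φ d
  induction d with
  | hyp hφ => exact Deriv.hyp (h hφ)
  | ax1 φ ψ => exact Deriv.ax1 φ ψ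
  | ax2 φ ψ χ => exact Deriv.ax2 φ ψ χ
  | ax3 φ ψ => exact Deriv.ax3 φ ψ
  | mp _ _ ih1 ih2 => exact Deriv.mp ih1 ih2

theorem Deriv.id (φ : F) : Deriv L Γ (L.imp φ φ) :=
  Deriv.mp (Deriv.mp (Deriv.ax2 φ (L.imp φ φ) φ) (Deriv.ax1 φ (L.imp φ φ))) (Deriv.ax1 φ φ)

theorem Deriv.deduction {A B : F} (h : Deriv L (insert A Γ) B) : Deriv L Γ (L.imp A B) := by
  induction h with
  | hyp hφ =>
    rcases hφ with rfl | h
    · exact Deriv.id _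
    · exact Deriv.mp (Deriv.ax1 _ _) (Deriv.hyp h)
  | ax1 φ ψ => exact Deriv.mp (Deriv.ax1 _ _) (Deriv.ax1 φ ψ)
  | ax2 φ ψ χ => exact Deriv.mp (Deriv.ax1 _ _) (Deriv.ax2 φ ψ χ)
  | ax3 φ ψ => exact Deriv.mp (Deriv.ax1 _ _) (Deriv.ax3 φ ψ)
  | mp _ _ ih1 ih2 => exact Deriv.mp (Deriv.mp (Deriv.ax2 _ _ _) ih1) ih2

theorem Deriv.subset_insert {A : F} : Γ ⊆ insert A Γ := fun _ h => Or.inr h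

theorem Deriv.trans {A B C : F} (h1 : Deriv L Γ (L.imp A B)) (h2 : Deriv L Γ (L.imp B C)) :
    Deriv L Γ (L.imp A C) := by
  apply Deriv.deduction
  exact Deriv.mp (h2.weaken Deriv.subset_insert)
    (Deriv.mp (h1.weaken Deriv.subset_insert) (Deriv.hyp (Set.mem_insert _ _)))

theorem Deriv.dni (A : F) : Deriv L Γ (L.imp A (L.neg (L.neg A))) := by
  apply Deriv.deduction
  apply Deriv.deduction
  exact Deriv.mp (Deriv.hyp (Set.mem_insert _ _))
    (Deriv.hyp (Or.inr (Set.mem_insert _ _)))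

theorem Deriv.dne (A : F) : Deriv L Γ (L.imp (L.neg (L.neg A)) A) :=
  Deriv.mp (Deriv.ax3 A (L.neg (L.neg A))) (Deriv.dni (L.neg A))

theorem Deriv.exFalso (A : F) : Deriv L Γ (L.imp L.bot A) := by
  have h1 : Deriv L Γ (L.imp L.bot (L.neg (L.neg A))) := by
    apply Deriv.deduction; apply Deriv.deduction
    exact Deriv.hyp (Or.inr (Set.mem_insert _ _))
  exact h1.trans (Deriv.dne A)

theorem Deriv.byCases {A C : F} (h1 : Deriv L Γ (L.imp A C))
    (h2 : Deriv L Γ (L.imp (L.neg A) C)) : Deriv L Γ C := by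
  have key : Deriv L Γ (L.imp (L.neg C) L.bot) := by
    apply Deriv.deduction
    have hnC : Deriv L (insert (L.neg C) Γ) (L.neg C) := Deriv.hyp (Set.mem_insert _ _)
    have hnA : Deriv L (insert (L.neg C) Γ) (L.neg A) := by
      apply Deriv.deduction
      refine Deriv.mp (hnC.weaken Deriv.subset_insert) ?_
      exact Deriv.mp ((h1.weaken Deriv.subset_insert).weaken Deriv.subset_insert)
        (Deriv.hyp (Set.mem_insert _ _))
    exact Deriv.mp hnC (Deriv.mp (h2.weaken Deriv.subset_insert) hnA)
  exact Deriv.mp (Deriv.dne C) key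

end Aux

/-- Cai. Abstractly: given a family of provability predicates
`B n` (for `[n]_T`) with monotonicity, the Löb conditions, provable completeness
(`T ⊢ ¬π → [m]¬π` for `π ∈ Π_{m+1} = Pi m`, and `T ⊢ π → [m+1]π` for
`π ∈ Π_{m+1}`), with `⟨n⟩⊤ ∈ Π_{n+1}`, the classes cumulative and exhaustive:
the set `C^∞_T(T) = ⋃_n {φ : T ⊢ [n]φ}` coincides with the deductive closure of
`T + RFN(T)`, i.e. of `T ∪ {⟨n⟩⊤ : n ∈ ℕ}`. -/
theorem stmt4 {F : Type} (L : Lang F) (T : Set F) (B : ℕ → F → F) (Pi : ℕ → Set F)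
    (mono : ∀ n φ, Deriv L T (L.imp (B n φ) (B (n+1) φ)))
    (nec : ∀ n φ, Deriv L T φ → Deriv L T (B n φ))
    (dist : ∀ n φ ψ, Deriv L T (L.imp (B n (L.imp φ ψ)) (L.imp (B n φ) (B n ψ))))
    (complNeg : ∀ m π, π ∈ Pi m → Deriv L T (L.imp (L.neg π) (B m (L.neg π))))
    (complPos : ∀ m π, π ∈ Pi m → Deriv L T (L.imp π (B (m+1) π)))
    (hconPi : ∀ n, L.neg (B n L.bot) ∈ Pi n)
    (cumul : ∀ m, Pi m ⊆ Pi (m+1))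
    (cofinal : ∀ φ, ∃ m, φ ∈ Pi m) :
    ∀ φ, (∃ n, Deriv L T (B n φ)) ↔
      Deriv L (T ∪ {χ | ∃ n, χ = L.neg (B n L.bot)}) φ := by
  -- lift provability along ≤
  have monoLe : ∀ {n m : ℕ}, n ≤ m → ∀ φ, Deriv L T (B n φ) → Deriv L T (B m φ) := by
    intro n m h φ
    induction h with
    | refl => exact id
    | step _ ih => exact fun d => Deriv.mp (mono _ φ) (ih d)
  have piLe : ∀ {n m : ℕ}, n ≤ m → Pi n ⊆ Pi m := by
    intro n m h
    induction h with
    | refl => exact fun _ h => h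
    | step _ ih => exact fun x hx => cumul _ (ih hx)
  set Γ : Set F := T ∪ {χ | ∃ n, χ = L.neg (B n L.bot)} with hΓ
  have hTΓ : T ⊆ Γ := Set.subset_union_left
  -- T proves B (n+1) (¬ B n ⊥)
  have reflProv : ∀ n, Deriv L T (B (n+1) (L.neg (B n L.bot))) := by
    intro n
    have h1 : Deriv L T (L.imp (L.neg (B n L.bot)) (B (n+1) (L.neg (B n L.bot)))) :=
      complPos n _ (hconPi n)
    have h2 : Deriv L T (L.imp (B n L.bot) (B (n+1) (L.neg (B n L.bot)))) := by
      have hb : Deriv L T (L.imp (B n L.bot) (B n (L.neg (B n L.bot)))) :=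
        Deriv.mp (dist n L.bot (L.neg (B n L.bot)))
          (nec n _ (Deriv.exFalso (L.neg (B n L.bot))))
      exact hb.trans (mono n _)
    have := Deriv.byCases h2 h1
    -- byCases on A := B n ⊥ : (A → C) and (¬A → C) give C
    exact this
  intro φ
  constructor
  · rintro ⟨n, hn⟩
    obtain ⟨m, hm⟩ := cofinal φ
    set k := max n m with hk
    have hφk : φ ∈ Pi k := piLe (le_max_right n m) hm
    have hBkφ : Deriv L T (B k φ) := monoLe (le_max_left n m) φ hn
    -- T ⊢ ¬φ → B k ⊥
    have h1 : Deriv L T (L.imp (L.neg φ) (B k (L.neg φ))) := complNeg k φ hφk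
    have h2 : Deriv L T (L.imp (B k (L.neg φ)) (B k L.bot)) := by
      apply Deriv.deduction
      refine Deriv.mp (Deriv.mp ((dist k φ L.bot).weaken Deriv.subset_insert)
        (Deriv.hyp (Set.mem_insert _ _))) (hBkφ.weaken Deriv.subset_insert)
    have h3 : Deriv L T (L.imp (L.neg φ) (B k L.bot)) := h1.trans h2
    -- In Γ: have ¬ B k ⊥, derive φ
    have hcon : Deriv L Γ (L.neg (B k L.bot)) := Deriv.hyp (Or.inr ⟨k, rfl⟩)
    have hnn : Deriv L Γ (L.neg (L.neg φ)) := by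
      apply Deriv.deduction
      exact Deriv.mp (hcon.weaken Deriv.subset_insert)
        (Deriv.mp ((h3.weaken hTΓ).weaken Deriv.subset_insert)
          (Deriv.hyp (Set.mem_insert _ _)))
    exact Deriv.mp (Deriv.dne φ) hnn
  · intro h
    induction h with
    | hyp hφ =>
      rcases hφ with h | ⟨n, rfl⟩
      · exact ⟨0, nec 0 _ (Deriv.hyp h)⟩
      · exact ⟨n+1, reflProv n⟩
    | ax1 φ ψ => exact ⟨0, nec 0 _ (Deriv.ax1 φ ψ)⟩
    | ax2 φ ψ χ => exact ⟨0, nec 0 _ (Deriv.ax2 φ ψ χ)⟩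
    | ax3 φ ψ => exact ⟨0, nec 0 _ (Deriv.ax3 φ ψ)⟩
    | mp h1 h2 ih1 ih2 =>
      obtain ⟨n1, d1⟩ := ih1
      obtain ⟨n2, d2⟩ := ih2
      refine ⟨max n1 n2, ?_⟩
      exact Deriv.mp (Deriv.mp (dist _ _ _) (monoLe (le_max_left n1 n2) _ d1))
        (monoLe (le_max_right n1 n2) _ d2)
end

section
/- For every sentence ψ, C^n_S(T + ⟨n⟩_S ψ) ⊆ C^n_S(T) + ψ: if T + ⟨n⟩_S ψ ⊢ [n]_S φ, then the deductive closure of C^n_S(T) together with ψ proves φ. -/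
namespace DerivAux

variable {F : Type} {L : Lang F} {Γ Δ : Set F}

theorem weaken (h : Γ ⊆ Δ) : ∀ {φ}, Deriv L Γ φ → Deriv L Δ φ := by
  intro φ d
  induction d with
  | hyp hm => exact Deriv.hyp (h hm)
  | ax1 φ ψ => exact Deriv.ax1 φ ψ
  | ax2 φ ψ χ => exact Deriv.ax2 φ ψ χ
  | ax3 φ ψ => exact Deriv.ax3 φ ψ
  | mp _ _ ih1 ih2 => exact Deriv.mp ih1 ih2

theorem id' (φ : F) : Deriv L Γ (L.imp φ φ) :=
  Deriv.mp (Deriv.mp (Deriv.ax2 φ (L.imp φ φ) φ) (Deriv.ax1 φ (L.imp φ φ))) (Deriv.ax1 φ φ)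

theorem deduction {ψ φ : F} (d : Deriv L (Γ ∪ {ψ}) φ) : Deriv L Γ (L.imp ψ φ) := by
  induction d with
  | @hyp φ hm =>
    rcases hm with hm | hm
    · exact Deriv.mp (Deriv.ax1 φ ψ) (Deriv.hyp hm)
    · rcases hm; exact id' ψ
  | ax1 φ χ => exact Deriv.mp (Deriv.ax1 _ ψ) (Deriv.ax1 φ χ)
  | ax2 φ χ ρ => exact Deriv.mp (Deriv.ax1 _ ψ) (Deriv.ax2 φ χ ρ)
  | ax3 φ χ => exact Deriv.mp (Deriv.ax1 _ ψ) (Deriv.ax3 φ χ)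
  | @mp φ χ _ _ ih1 ih2 => exact Deriv.mp (Deriv.mp (Deriv.ax2 ψ φ χ) ih1) ih2

/-- `⊢ ¬ψ → (ψ → φ)` -/
theorem exfalso' (ψ φ : F) : Deriv L Γ (L.imp (L.neg ψ) (L.imp ψ φ)) := by
  apply deduction
  exact Deriv.mp (Deriv.ax3 φ ψ)
    (Deriv.mp (Deriv.ax1 (L.neg ψ) (L.neg φ)) (Deriv.hyp (Or.inr rfl)))

/-- contraposition: from `A → C` derive `¬C → ¬A` -/
theorem contrapose {A C : F} (d : Deriv L Γ (L.imp A C)) :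
    Deriv L Γ (L.imp (L.neg C) (L.neg A)) := by
  apply deduction
  apply deduction
  have hA : Deriv L ((Γ ∪ {L.neg C}) ∪ {A}) A := Deriv.hyp (Or.inr rfl)
  have hAC : Deriv L ((Γ ∪ {L.neg C}) ∪ {A}) (L.imp A C) :=
    weaken (Set.subset_union_left.trans Set.subset_union_left) d
  have hnC : Deriv L ((Γ ∪ {L.neg C}) ∪ {A}) (L.neg C) :=
    Deriv.hyp (Or.inl (Or.inr rfl))
  exact Deriv.mp hnC (Deriv.mp hAC hA)

/-- double negation elimination -/
theorem dne {A : F} (d : Deriv L Γ (L.neg (L.neg A))) : Deriv L Γ A := by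
  have h1 : Deriv L Γ (L.imp (L.neg A) (L.neg (L.neg (L.neg A)))) := by
    apply deduction
    have hnA : Deriv L (Γ ∪ {L.neg A}) (L.neg A) := Deriv.hyp (Or.inr rfl)
    have hnnA : Deriv L (Γ ∪ {L.neg A}) (L.neg (L.neg A)) :=
      weaken Set.subset_union_left d
    have hbot : Deriv L (Γ ∪ {L.neg A}) L.bot := Deriv.mp hnnA hnA
    exact Deriv.mp (Deriv.ax1 L.bot (L.neg (L.neg A))) hbot
  exact Deriv.mp (Deriv.mp (Deriv.ax3 A (L.neg (L.neg A))) h1) d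

/-- case split: from `A → C` and `¬A → C` derive `C` -/
theorem cases' {A C : F} (h1 : Deriv L Γ (L.imp A C)) (h2 : Deriv L Γ (L.imp (L.neg A) C)) :
    Deriv L Γ C := by
  apply dne
  apply deduction
  have hnC : Deriv L (Γ ∪ {L.neg C}) (L.neg C) := Deriv.hyp (Or.inr rfl)
  have hnA : Deriv L (Γ ∪ {L.neg C}) (L.neg A) :=
    Deriv.mp (weaken Set.subset_union_left (contrapose h1)) hnC
  have hnnA : Deriv L (Γ ∪ {L.neg C}) (L.neg (L.neg A)) :=
    Deriv.mp (weaken Set.subset_union_left (contrapose h2)) hnC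
  exact Deriv.mp hnnA hnA

end DerivAux

open DerivAux in
/-- For every sentence `ψ`,
`C^n_S(T + ⟨n⟩_S ψ) ⊆ C^n_S(T) + ψ`: if `T + ⟨n⟩_S ψ ⊢ [n]_S φ`, then
`φ` is derivable from `C^n_S(T) = {χ : T ⊢ [n]_S χ}` together with `ψ`. -/
theorem stmt5 {F : Type} (L : Lang F) (S T : Set F) (Bn : F → F)
    (nec : ∀ φ, Deriv L S φ → Deriv L T (Bn φ))
    (dist : ∀ φ ψ, Deriv L T (L.imp (Bn (L.imp φ ψ)) (L.imp (Bn φ) (Bn ψ)))) :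
    ∀ ψ φ, Deriv L (T ∪ {L.neg (Bn (L.neg ψ))}) (Bn φ) →
      Deriv L ({χ | Deriv L T (Bn χ)} ∪ {ψ}) φ := by
  intro ψ φ h
  -- T ⊢ ¬Bn(¬ψ) → Bn φ
  have hded : Deriv L T (L.imp (L.neg (Bn (L.neg ψ))) (Bn φ)) := deduction h
  -- T ⊢ Bn φ → Bn (ψ → φ)
  have h1 : Deriv L T (L.imp (Bn φ) (Bn (L.imp ψ φ))) :=
    Deriv.mp (dist φ (L.imp ψ φ)) (nec _ (Deriv.ax1 φ ψ))
  -- T ⊢ Bn ¬ψ → Bn (ψ → φ)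
  have h2 : Deriv L T (L.imp (Bn (L.neg ψ)) (Bn (L.imp ψ φ))) :=
    Deriv.mp (dist (L.neg ψ) (L.imp ψ φ)) (nec _ (exfalso' ψ φ))
  -- case split on Bn ¬ψ
  have h3 : Deriv L T (L.imp (L.neg (Bn (L.neg ψ))) (Bn (L.imp ψ φ))) := by
    apply deduction
    have hA : Deriv L (T ∪ {L.neg (Bn (L.neg ψ))}) (L.neg (Bn (L.neg ψ))) :=
      Deriv.hyp (Or.inr rfl)
    exact Deriv.mp (weaken Set.subset_union_left h1)
      (Deriv.mp (weaken Set.subset_union_left hded) hA)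
  have hC : Deriv L T (Bn (L.imp ψ φ)) := cases' h2 h3
  exact Deriv.mp (Deriv.hyp (Or.inl hC)) (Deriv.hyp (Or.inr rfl))
end

section
/- Provably in EA, S + Rfn^n(S) ⊆ C^{n+1}_S(T): every consequence of S together with the relativized local reflection schema {[n]_S ψ → ψ : ψ a sentence} is provably (n+1)-provable in any extension T of EA. -/
/-!
Distribution and necessitation lift `B₂` along derivations, so it suffices to treat a single
reflection instance `B₁ ψ → ψ`. Split on `B₁ ψ`: if it holds, then `B₂ ψ` and hence
`B₂ (B₁ ψ → ψ)`; if not, provable completeness gives `B₂ ¬B₁ ψ`, which again yields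
`B₂ (B₁ ψ → ψ)`.
-/

namespace Deriv
variable {F : Type} {L : Lang F} {Γ Δ : Set F} {φ ψ χ : F}

theorem mono (h : Deriv L Γ φ) (hs : Γ ⊆ Δ) : Deriv L Δ φ := by
  induction h with
  | hyp h => exact .hyp (hs h)
  | ax1 a b => exact .ax1 a b
  | ax2 a b c => exact .ax2 a b c
  | ax3 a b => exact .ax3 a b
  | mp _ _ ih1 ih2 => exact ih1.mp ih2

theorem imp_self (φ : F) : Deriv L Γ (L.imp φ φ) :=
  ((Deriv.ax2 φ (L.imp φ φ) φ).mp (.ax1 _ _)).mp (.ax1 _ _)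

theorem deduction_s8 (h : Deriv L (insert φ Γ) ψ) : Deriv L Γ (L.imp φ ψ) := by
  induction h with
  | hyp h =>
    rcases Set.mem_insert_iff.1 h with rfl | h
    · exact imp_self _
    · exact (Deriv.ax1 _ _).mp (.hyp h)
  | ax1 a b => exact (Deriv.ax1 _ _).mp (.ax1 a b)
  | ax2 a b c => exact (Deriv.ax1 _ _).mp (.ax2 a b c)
  | ax3 a b => exact (Deriv.ax1 _ _).mp (.ax3 a b)
  | mp _ _ ih1 ih2 => exact ((Deriv.ax2 _ _ _).mp ih1).mp ih2

theorem imp_trans (h1 : Deriv L Γ (L.imp φ ψ)) (h2 : Deriv L Γ (L.imp ψ χ)) :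
    Deriv L Γ (L.imp φ χ) :=
  ((Deriv.ax2 φ ψ χ).mp ((Deriv.ax1 _ _).mp h2)).mp h1

theorem absurd (φ ψ : F) : Deriv L Γ (L.imp (L.neg φ) (L.imp φ ψ)) :=
  imp_trans (.ax1 (L.neg φ) (L.neg ψ)) (.ax3 ψ φ)

theorem imp_not_not (φ : F) : Deriv L Γ (L.imp φ (L.neg (L.neg φ))) := by
  refine deduction_s8 (deduction_s8 ?_)
  exact (Deriv.hyp (Set.mem_insert _ _)).mp (.hyp (Set.mem_insert_of_mem _ (Set.mem_insert _ _)))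

theorem not_not_imp (φ : F) : Deriv L Γ (L.imp (L.neg (L.neg φ)) φ) :=
  (Deriv.ax3 φ (L.neg (L.neg φ))).mp (imp_not_not (L.neg φ))

theorem by_cases (h1 : Deriv L Γ (L.imp φ χ)) (h2 : Deriv L Γ (L.imp (L.neg φ) χ)) :
    Deriv L Γ χ := by
  have not_not_χ : Deriv L Γ (L.neg (L.neg χ)) := by
    refine deduction_s8 ?_
    have not_χ : Deriv L (insert (L.neg χ) Γ) (L.neg χ) := .hyp (Set.mem_insert _ _)
    have not_φ : Deriv L (insert (L.neg χ) Γ) (L.neg φ) :=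
      imp_trans (h1.mono (Set.subset_insert _ _)) not_χ
    exact not_χ.mp ((h2.mono (Set.subset_insert _ _)).mp not_φ)
  exact (not_not_imp χ).mp not_not_χ

theorem box_of_deriv {T : Set F} {B : F → F}
    (dist : ∀ φ ψ, Deriv L T (L.imp (B (L.imp φ ψ)) (L.imp (B φ) (B ψ))))
    (box_logic : ∀ φ, Deriv L ∅ φ → Deriv L T (B φ))
    (box_hyp : ∀ φ ∈ Γ, Deriv L T (B φ)) (h : Deriv L Γ φ) : Deriv L T (B φ) := by
  induction h with
  | hyp h => exact box_hyp _ h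
  | ax1 a b => exact box_logic _ (.ax1 a b)
  | ax2 a b c => exact box_logic _ (.ax2 a b c)
  | ax3 a b => exact box_logic _ (.ax3 a b)
  | mp _ _ ih1 ih2 => exact ((dist _ _).mp ih1).mp ih2

end Deriv

theorem box_reflection_instance {F : Type} {L : Lang F} {EA S : Set F} {B1 B2 : F → F}
    (mono : ∀ ψ, Deriv L EA (L.imp (B1 ψ) (B2 ψ)))
    (nec2 : ∀ φ, Deriv L S φ → Deriv L EA (B2 φ))
    (dist2 : ∀ φ ψ, Deriv L EA (L.imp (B2 (L.imp φ ψ)) (L.imp (B2 φ) (B2 ψ))))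
    (compl : ∀ ψ, Deriv L EA (L.imp (L.neg (B1 ψ)) (B2 (L.neg (B1 ψ))))) (ψ : F) :
    Deriv L EA (B2 (L.imp (B1 ψ) ψ)) :=
  have box_imp : ∀ {φ χ}, Deriv L S (L.imp φ χ) → Deriv L EA (L.imp (B2 φ) (B2 χ)) :=
    fun h => (dist2 _ _).mp (nec2 _ h)
  Deriv.by_cases (Deriv.imp_trans (mono ψ) (box_imp (.ax1 _ _)))
    (Deriv.imp_trans (compl ψ) (box_imp (Deriv.absurd _ _)))

theorem stmt8_general {F : Type} (L : Lang F) (EA S T : Set F) (B1 B2 : F → F)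
    (hExtT : ∀ φ, Deriv L EA φ → Deriv L T φ)
    (mono : ∀ ψ, Deriv L EA (L.imp (B1 ψ) (B2 ψ)))
    (nec2 : ∀ φ, Deriv L S φ → Deriv L EA (B2 φ))
    (dist2 : ∀ φ ψ, Deriv L EA (L.imp (B2 (L.imp φ ψ)) (L.imp (B2 φ) (B2 ψ))))
    (compl : ∀ ψ, Deriv L EA (L.imp (L.neg (B1 ψ)) (B2 (L.neg (B1 ψ))))) :
    ∀ φ, Deriv L (S ∪ RfnSet L B1) φ → Deriv L T (B2 φ) := by
  intro φ h
  refine Deriv.box_of_deriv (fun φ ψ => hExtT _ (dist2 φ ψ))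
    (fun φ hφ => hExtT _ (nec2 _ (hφ.mono (Set.empty_subset S)))) ?_ h
  rintro _ (hS | ⟨ψ, rfl⟩)
  · exact hExtT _ (nec2 _ (.hyp hS))
  · exact hExtT _ (box_reflection_instance mono nec2 dist2 compl ψ)

/-- Provably (in the abstract two-modality setting with
`B₁ = [n]_S`, `B₂ = [n+1]_S`): every consequence of `S` together with the
relativized local reflection schema `{[n]_S ψ → ψ}` is provably
`(n+1)`-provable in any extension `T` of `EA`, i.e.
`S + Rfn^n(S) ⊆ C^{n+1}_S(T)`. -/
theorem stmt8 {F : Type} (L : Lang F) (EA S T : Set F) (B1 B2 : F → F)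
    (hExtT : ∀ φ, Deriv L EA φ → Deriv L T φ)
    (hExtS : ∀ φ, Deriv L EA φ → Deriv L S φ)
    (mono : ∀ ψ, Deriv L EA (L.imp (B1 ψ) (B2 ψ)))
    (nec2 : ∀ φ, Deriv L S φ → Deriv L EA (B2 φ))
    (dist2 : ∀ φ ψ, Deriv L EA (L.imp (B2 (L.imp φ ψ)) (L.imp (B2 φ) (B2 ψ))))
    (compl : ∀ ψ, Deriv L EA (L.imp (L.neg (B1 ψ)) (B2 (L.neg (B1 ψ))))) :
    ∀ φ, Deriv L (S ∪ RfnSet L B1) φ → Deriv L T (B2 φ) :=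
  stmt8_general L EA S T B1 B2 hExtT mono nec2 dist2 compl
end
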